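/- arXiv:1901.09392 — 2 statements merged into one kernel-verified Lean document; each statement's English description precedes it below -/
import Mathlib

section
/- Let k: ℝ^d × ℝ^d → ℝ≥0 be a kernel such that for each x, z ↦ k(x, z) is a probability density, and suppose k is translation invariant: k(x + u, z + u) = k(x, z) for all u. Define the smoothed explanation Φ_k(x) = ∫ Φ(z) k(x, z) dz. Then for any r > 0, SENS_MAX(Φ_k, x, r) ≤ ∫ SENS_MAX(Φ, z, r) k(x, z) dz, where SENS_MAX(Φ, x, r) = sup_{‖u‖ ≤ r} ‖Φ(x + u) − Φ(x)‖. -/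
/-!
Translation invariance of the kernel turns `Φ_k (x + u) - Φ_k x` into the single integral
`∫ k(x, z) • (Φ (z + u) - Φ z) dz`, whose integrand has norm at most `SENS_MAX(Φ, z, r) * k(x, z)`.
-/

open MeasureTheory

section MaxSensitivity

variable {E F : Type*} [SeminormedAddCommGroup E] [SeminormedAddCommGroup F]

/-- `SENS_MAX(Φ, x, r)`; when the set is unbounded above (possible only for unbounded `Φ`) the
`sSup` takes the junk value `0`. -/
noncomputable def maxSensitivity (Φ : E → F) (r : ℝ) (x : E) : ℝ :=
  sSup {y | ∃ u : E, ‖u‖ ≤ r ∧ y = ‖Φ (x + u) - Φ x‖}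

lemma maxSensitivity_nonneg (Φ : E → F) (r : ℝ) (x : E) : 0 ≤ maxSensitivity Φ r x :=
  Real.sSup_nonneg (by rintro _ ⟨u, -, rfl⟩; exact norm_nonneg _)

lemma norm_sub_le_maxSensitivity {Φ : E → F} {B : ℝ} (hB : ∀ z, ‖Φ z‖ ≤ B) {r : ℝ} (x : E)
    {u : E} (hu : ‖u‖ ≤ r) : ‖Φ (x + u) - Φ x‖ ≤ maxSensitivity Φ r x := by
  refine le_csSup ⟨B + B, ?_⟩ ⟨u, hu, rfl⟩
  rintro _ ⟨v, -, rfl⟩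
  exact (norm_sub_le _ _).trans (add_le_add (hB _) (hB _))

lemma maxSensitivity_le {Φ : E → F} {r c : ℝ} {x : E} (hc : 0 ≤ c)
    (h : ∀ u, ‖u‖ ≤ r → ‖Φ (x + u) - Φ x‖ ≤ c) : maxSensitivity Φ r x ≤ c :=
  Real.sSup_le (by rintro _ ⟨u, hu, rfl⟩; exact h u hu) hc

end MaxSensitivity

lemma norm_integral_smul_le_integral_mul {α F : Type*} [MeasurableSpace α] {μ : Measure α}
    [NormedAddCommGroup F] [NormedSpace ℝ F] {k s : α → ℝ} {g : α → F}
    (hk : ∀ z, 0 ≤ k z) (hg : ∀ z, ‖g z‖ ≤ s z) (hsk : Integrable (fun z => s z * k z) μ) :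
    ‖∫ z, k z • g z ∂μ‖ ≤ ∫ z, s z * k z ∂μ := by
  refine norm_integral_le_of_norm_le hsk (ae_of_all _ fun z => ?_)
  rw [norm_smul, Real.norm_of_nonneg (hk z), mul_comm]
  exact mul_le_mul_of_nonneg_right (hg z) (hk z)

section TranslationInvariantKernel

variable {G F : Type*} [AddGroup G] [MeasurableSpace G] [MeasurableAdd G] {μ : Measure G}
  [NormedAddCommGroup F] [NormedSpace ℝ F] {k : G → G → ℝ}

lemma integral_kernel_smul_add_right [μ.IsAddRightInvariant]
    (hk : ∀ x z u, k (x + u) (z + u) = k x z) (Φ : G → F) (x u : G) :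
    ∫ z, k (x + u) z • Φ z ∂μ = ∫ z, k x z • Φ (z + u) ∂μ := by
  rw [← integral_add_right_eq_self _ u]
  simp only [hk]

lemma integrable_smul_comp_add_right {x : G} (hkx : Integrable (k x) μ) {Φ : G → F} {B : ℝ}
    (hB : ∀ z, ‖Φ z‖ ≤ B) (hΦ : StronglyMeasurable Φ) (u : G) :
    Integrable (fun z => k x z • Φ (z + u)) μ :=
  hkx.smul_bdd B (hΦ.comp_measurable (measurable_add_const u)).aestronglyMeasurable
    (ae_of_all _ fun _ => hB _)

lemma integral_kernel_smul_add_right_sub [μ.IsAddRightInvariant]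
    (hk : ∀ x z u, k (x + u) (z + u) = k x z) {x : G} (hkx : Integrable (k x) μ) {Φ : G → F}
    {B : ℝ} (hB : ∀ z, ‖Φ z‖ ≤ B) (hΦ : StronglyMeasurable Φ) (u : G) :
    ∫ z, k (x + u) z • Φ z ∂μ - ∫ z, k x z • Φ z ∂μ = ∫ z, k x z • (Φ (z + u) - Φ z) ∂μ := by
  have hΦ0 := integrable_smul_comp_add_right hkx hB hΦ 0
  simp only [add_zero] at hΦ0
  rw [integral_kernel_smul_add_right hk, ← integral_sub
    (integrable_smul_comp_add_right hkx hB hΦ u) hΦ0]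
  simp only [smul_sub]

end TranslationInvariantKernel

theorem stmt6_general {d : ℕ} {F : Type*} [NormedAddCommGroup F] [NormedSpace ℝ F]
    (k : (Fin d → ℝ) → (Fin d → ℝ) → ℝ)
    (hk0 : ∀ x z, 0 ≤ k x z)
    (hkint : ∀ x, Integrable (fun z => k x z) volume)
    (hktrans : ∀ x z u, k (x + u) (z + u) = k x z)
    (Φ : (Fin d → ℝ) → F) (B : ℝ) (hB : ∀ z, ‖Φ z‖ ≤ B)
    (hΦm : StronglyMeasurable Φ)
    (x : Fin d → ℝ) (r : ℝ)
    (S : (Fin d → ℝ) → ℝ)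
    (hS : ∀ z, S z = sSup {y | ∃ u : Fin d → ℝ, ‖u‖ ≤ r ∧ y = ‖Φ (z + u) - Φ z‖})
    (hSint : Integrable (fun z => S z * k x z) volume)
    (Φk : (Fin d → ℝ) → F) (hΦk : ∀ y, Φk y = ∫ z, k y z • Φ z) :
    sSup {y | ∃ u : Fin d → ℝ, ‖u‖ ≤ r ∧ y = ‖Φk (x + u) - Φk x‖} ≤
      ∫ z, S z * k x z := by
  obtain rfl : S = maxSensitivity Φ r := funext hS
  refine maxSensitivity_le
    (integral_nonneg fun z => mul_nonneg (maxSensitivity_nonneg Φ r z) (hk0 x z)) fun u hu => ?_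
  rw [hΦk, hΦk, integral_kernel_smul_add_right_sub hktrans (hkint x) hB hΦm u]
  exact norm_integral_smul_le_integral_mul (hk0 x)
    (fun z => norm_sub_le_maxSensitivity hB z hu) hSint

theorem stmt6 {d : ℕ} {F : Type*} [NormedAddCommGroup F] [NormedSpace ℝ F]
    [CompleteSpace F]
    (k : (Fin d → ℝ) → (Fin d → ℝ) → ℝ)
    (hk0 : ∀ x z, 0 ≤ k x z)
    (hk1 : ∀ x, ∫ z, k x z = 1)
    (hkm : ∀ x, Measurable (k x))
    (hkint : ∀ x, Integrable (fun z => k x z) volume)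
    (hktrans : ∀ x z u, k (x + u) (z + u) = k x z)
    (Φ : (Fin d → ℝ) → F) (B : ℝ) (hB : ∀ z, ‖Φ z‖ ≤ B)
    (hΦm : StronglyMeasurable Φ)
    (x : Fin d → ℝ) (r : ℝ) (hr : 0 ≤ r)
    (S : (Fin d → ℝ) → ℝ)
    (hS : ∀ z, S z = sSup {y | ∃ u : Fin d → ℝ, ‖u‖ ≤ r ∧ y = ‖Φ (z + u) - Φ z‖})
    (hSint : Integrable (fun z => S z * k x z) volume)
    (Φk : (Fin d → ℝ) → F) (hΦk : ∀ y, Φk y = ∫ z, k y z • Φ z) :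
    sSup {y | ∃ u : Fin d → ℝ, ‖u‖ ≤ r ∧ y = ‖Φk (x + u) - Φk x‖} ≤
      ∫ z, S z * k x z :=
  stmt6_general k hk0 hkint hktrans Φ B hB hΦm x r S hS hSint Φk hΦk
end

section
/- (Robust infidelity lower bound.) Let f: ℝ^d → ℝ, Φ: ℝ^d → ℝ^d, and let I ∈ ℝ^d be a fixed perturbation vector. Define RINFD = sup_{‖u‖ ≤ r} (Iᵀ Φ(x + u) − (f(x + u) − f(x + u − I)))², A = sup_{‖u‖ ≤ r} |Iᵀ Φ(x + u) − Iᵀ Φ(x)|, and B(y) = sup_{‖u‖ ≤ r} |f(y + u) − f(y)|. Then RINFD ≥ ((A − B(x) − B(x − I))/2)², provided A ≥ B(x) + B(x − I). -/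
/-!
Write `g(u) = IᵀΦ(x+u) − (f(x+u) − f(x+u−I))` for the infidelity residual. The increment
`IᵀΦ(x+u) − IᵀΦ(x)` equals `g(u) − g(0)` plus the increments of `f` at `x` and at `x − I`, so
`A ≤ B(x) + B(x−I) + |g(u)| + |g(0)| ≤ B(x) + B(x−I) + 2 √RINFD`; squaring gives the bound.
-/

lemma abs_sub_le_residuals_add_increments (p₀ p₁ a₀ a₁ b₀ b₁ : ℝ) :
    |p₁ - p₀| ≤ |p₁ - (a₁ - b₁)| + |p₀ - (a₀ - b₀)| + |a₁ - a₀| + |b₁ - b₀| := by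
  rw [abs_le]
  constructor <;>
    linarith [le_abs_self (p₁ - (a₁ - b₁)), neg_abs_le (p₁ - (a₁ - b₁)),
      le_abs_self (p₀ - (a₀ - b₀)), neg_abs_le (p₀ - (a₀ - b₀)),
      le_abs_self (a₁ - a₀), neg_abs_le (a₁ - a₀), le_abs_self (b₁ - b₀), neg_abs_le (b₁ - b₀)]

lemma abs_residual_le_residual_add_increments (p₀ p₁ a₀ a₁ b₀ b₁ : ℝ) :
    |p₁ - (a₁ - b₁)| ≤ |p₀ - (a₀ - b₀)| + |p₁ - p₀| + |a₁ - a₀| + |b₁ - b₀| := by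
  rw [abs_le]
  constructor <;>
    linarith [le_abs_self (p₀ - (a₀ - b₀)), neg_abs_le (p₀ - (a₀ - b₀)),
      le_abs_self (p₁ - p₀), neg_abs_le (p₁ - p₀),
      le_abs_self (a₁ - a₀), neg_abs_le (a₁ - a₀), le_abs_self (b₁ - b₀), neg_abs_le (b₁ - b₀)]

/-- Rather than `F '' {u | P u}`, so that the sets in the statement are of this form by `rfl`. -/
def valuesOn {ι : Type*} (P : ι → Prop) (F : ι → ℝ) : Set ℝ := {y | ∃ u, P u ∧ y = F u}

section valuesOn

variable {ι : Type*} {P : ι → Prop} {F : ι → ℝ} {u : ι} {c : ℝ}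

lemma le_csSup_valuesOn (hF : BddAbove (valuesOn P F)) (hu : P u) :
    F u ≤ sSup (valuesOn P F) :=
  le_csSup hF ⟨u, hu, rfl⟩

lemma csSup_valuesOn_le (hu : P u) (h : ∀ v, P v → F v ≤ c) : sSup (valuesOn P F) ≤ c :=
  csSup_le ⟨F u, u, hu, rfl⟩ fun _ ⟨v, hv, hy⟩ => hy ▸ h v hv

lemma bddAbove_valuesOn (h : ∀ v, P v → F v ≤ c) : BddAbove (valuesOn P F) :=
  ⟨c, fun _ ⟨v, hv, hy⟩ => hy ▸ h v hv⟩

end valuesOn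

theorem sSup_abs_sub_le_add_add_two_mul_sqrt {ι : Type*} {P : ι → Prop} {u₀ : ι}
    {p a b : ι → ℝ} {p₀ a₀ b₀ : ℝ} (h₀ : P u₀) (hp₀ : p u₀ = p₀) (ha₀ : a u₀ = a₀)
    (hb₀ : b u₀ = b₀)
    (hp : BddAbove (valuesOn P fun u => |p u - p₀|))
    (ha : BddAbove (valuesOn P fun u => |a u - a₀|))
    (hb : BddAbove (valuesOn P fun u => |b u - b₀|)) :
    sSup (valuesOn P fun u => |p u - p₀|) ≤
      sSup (valuesOn P fun u => |a u - a₀|) + sSup (valuesOn P fun u => |b u - b₀|) +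
        2 * √(sSup (valuesOn P fun u => (p u - (a u - b u)) ^ 2)) := by
  set Bp := sSup (valuesOn P fun u => |p u - p₀|)
  set Ba := sSup (valuesOn P fun u => |a u - a₀|)
  set Bb := sSup (valuesOn P fun u => |b u - b₀|)
  have hres : ∀ u, P u → |p u - (a u - b u)| ≤ |p₀ - (a₀ - b₀)| + Bp + Ba + Bb := fun u hu =>
    (abs_residual_le_residual_add_increments p₀ (p u) a₀ (a u) b₀ (b u)).trans <| by
      gcongr
      exacts [le_csSup_valuesOn hp hu, le_csSup_valuesOn ha hu, le_csSup_valuesOn hb hu]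
  have hR : BddAbove (valuesOn P fun u => (p u - (a u - b u)) ^ 2) :=
    bddAbove_valuesOn fun u hu => by
      rw [← sq_abs]
      exact pow_le_pow_left₀ (abs_nonneg _) (hres u hu) 2
  set R := sSup (valuesOn P fun u => (p u - (a u - b u)) ^ 2)
  have hsqrt : ∀ u, P u → |p u - (a u - b u)| ≤ √R := fun u hu =>
    Real.abs_le_sqrt (le_csSup_valuesOn hR hu)
  refine csSup_valuesOn_le h₀ fun u hu => ?_
  have hbase := hsqrt u₀ h₀
  rw [hp₀, ha₀, hb₀] at hbase
  linarith [abs_sub_le_residuals_add_increments p₀ (p u) a₀ (a u) b₀ (b u), hsqrt u hu, le_csSup_valuesOn ha hu, le_csSup_valuesOn hb hu]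

theorem stmt9 {d : ℕ} (f : (Fin d → ℝ) → ℝ) (Φ : (Fin d → ℝ) → (Fin d → ℝ))
    (x I : Fin d → ℝ) (r : ℝ) (hr : 0 ≤ r)
    (RINFD A : ℝ) (Bf : (Fin d → ℝ) → ℝ)
    (hR : RINFD = sSup {y | ∃ u : Fin d → ℝ, ‖u‖ ≤ r ∧
      y = ((∑ j, I j * Φ (x + u) j) - (f (x + u) - f (x + u - I))) ^ 2})
    (hA : A = sSup {y | ∃ u : Fin d → ℝ, ‖u‖ ≤ r ∧
      y = |(∑ j, I j * Φ (x + u) j) - ∑ j, I j * Φ x j|})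
    (hBddA : BddAbove {y | ∃ u : Fin d → ℝ, ‖u‖ ≤ r ∧
      y = |(∑ j, I j * Φ (x + u) j) - ∑ j, I j * Φ x j|})
    (hBf : ∀ w, Bf w = sSup {y | ∃ u : Fin d → ℝ, ‖u‖ ≤ r ∧ y = |f (w + u) - f w|})
    (hBddB : ∀ w, BddAbove {y | ∃ u : Fin d → ℝ, ‖u‖ ≤ r ∧ y = |f (w + u) - f w|})
    (hAB : Bf x + Bf (x - I) ≤ A) :
    ((A - Bf x - Bf (x - I)) / 2) ^ 2 ≤ RINFD := by
  have hBxI : Bf (x - I) = sSup (valuesOn (fun u : Fin d → ℝ => ‖u‖ ≤ r)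
      fun u => |f (x + u - I) - f (x - I)|) := by
    simp only [hBf, valuesOn, sub_add_eq_add_sub]
  have hBddxI : BddAbove (valuesOn (fun u : Fin d → ℝ => ‖u‖ ≤ r)
      fun u => |f (x + u - I) - f (x - I)|) := by
    simpa only [valuesOn, sub_add_eq_add_sub] using hBddB (x - I)
  have key : A ≤ Bf x + Bf (x - I) + 2 * √RINFD := by
    rw [hA, hBf x, hBxI, hR]
    exact sSup_abs_sub_le_add_add_two_mul_sqrt (P := fun u : Fin d → ℝ => ‖u‖ ≤ r) (u₀ := 0)
      (p := fun u => ∑ j, I j * Φ (x + u) j) (a := fun u => f (x + u))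
      (b := fun u => f (x + u - I)) (by simpa using hr) (by simp) (by simp) (by simp)
      hBddA (hBddB x) hBddxI
  have hRnn : 0 ≤ RINFD := hR ▸ Real.sSup_nonneg fun _ ⟨_, _, hy⟩ => hy ▸ sq_nonneg _
  exact (Real.le_sqrt (by linarith) hRnn).1 (by linarith)
end
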